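/- Assume the lattice is minimal and elliptic, the dual graph is connected, Z_K ∈ L (numerically Gorenstein), and the lattice admits an elliptic sequence (s = 0; B_0 = V, B_1, …, B_m; Z_{B_0},…,Z_{B_m}) with C_t = ∑_{i=0}^{t} Z_{B_i}. If Z ∈ L satisfies Z > 0 and (Z, E_v) = (E_v,E_v)+2 for every v ∈ |Z| (its support carries a numerically Gorenstein subgraph with canonical cycle Z), then |Z| = B_i for some 0 ≤ i ≤ m, and moreover Z = Z_K − C_{i−1} (where C_{−1} = 0). -/

import Mathlib

open scoped BigOperators

/-- A negative definite lattice on the free ℤ-module with basis indexed by `V`,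
realized inside the ℚ-vector space `V → ℚ`.  The basis vector `E_v` is `Pi.single v 1`,
the symmetric bilinear form `B` takes integer values on basis vectors, is negative
definite, and has nonnegative off-diagonal entries. -/
structure LatticeData (V : Type*) [Fintype V] [DecidableEq V] where
  B : (V → ℚ) →ₗ[ℚ] (V → ℚ) →ₗ[ℚ] ℚ
  symm : ∀ x y, B x y = B y x
  int_basis : ∀ u v : V, ∃ n : ℤ, B (Pi.single u 1) (Pi.single v 1) = (n : ℚ)
  negdef : ∀ x : V → ℚ, x ≠ 0 → B x x < 0
  offdiag : ∀ u v : V, u ≠ v → (0 : ℚ) ≤ B (Pi.single u 1) (Pi.single v 1)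

variable {V : Type*} [Fintype V] [DecidableEq V]

/-- The basis vector `E_v`. -/
def Ev (v : V) : V → ℚ := Pi.single v 1

/-- `x` lies in the lattice `L` (has integral coefficients). -/
def inL (x : V → ℚ) : Prop := ∀ v, ∃ n : ℤ, x v = (n : ℚ)

/-- The support `|x|` of a cycle. -/
def supp (x : V → ℚ) : Set V := {v | x v ≠ 0}

/-- `x ∈ L'`, the dual lattice: all pairings with basis vectors are integers. -/
def inLd (D : LatticeData V) (x : V → ℚ) : Prop := ∀ v, ∃ n : ℤ, D.B x (Ev v) = (n : ℚ)

/-- `x ∈ S'`: the antinef cone of the dual lattice. -/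
def inS' (D : LatticeData V) (x : V → ℚ) : Prop := inLd D x ∧ ∀ v, D.B x (Ev v) ≤ 0

/-- The Riemann–Roch expression `χ(x) = -(x, x - Z_K)/2`. -/
def chi (D : LatticeData V) (ZK x : V → ℚ) : ℚ := -(D.B x (x - ZK)) / 2

/-- `ZK` is the (anti)canonical cycle: `(Z_K, E_v) = (E_v,E_v) + 2` for all `v`. -/
def IsCanonical (D : LatticeData V) (ZK : V → ℚ) : Prop :=
  ∀ v, D.B ZK (Ev v) = D.B (Ev v) (Ev v) + 2

/-- The lattice is minimal: all self-intersections are at most `-2`. -/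
def IsMinimal (D : LatticeData V) : Prop := ∀ v : V, D.B (Ev v) (Ev v) ≤ -2

/-- The lattice is elliptic: `χ(l) ≥ 0` for all `l ∈ L`, `l > 0`, with value 0 attained. -/
def Elliptic (D : LatticeData V) (ZK : V → ℚ) : Prop :=
  (∀ l : V → ℚ, inL l → 0 ≤ l → l ≠ 0 → 0 ≤ chi D ZK l) ∧
  (∃ l : V → ℚ, inL l ∧ 0 ≤ l ∧ l ≠ 0 ∧ chi D ZK l = 0)

/-- The dual graph: `u ≠ v` are adjacent iff `(E_u, E_v) > 0`. -/
def dualGraph (D : LatticeData V) : SimpleGraph V where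
  Adj u v := u ≠ v ∧ 0 < D.B (Ev u) (Ev v)
  symm := by
    constructor
    intro u v h
    exact ⟨h.1.symm, by rw [D.symm]; exact h.2⟩
  loopless := by
    constructor
    intro u h
    exact h.1 rfl

theorem test_preamble : True := trivial

/-- An elliptic sequence `(s; B_0 ⊇ ⋯ ⊇ B_m; Z_{B_0}, …, Z_{B_m})` for the lattice,
following the conventions of the paper: `s` is the minimal antinef representative
of the class of `Z_K` (`s = 0` when `Z_K ∈ L`), `Bset j` is the support `B_j`,
and `Z j` is the fundamental cycle `Z_{B_j}` of `B_j` (for `0 ≤ j ≤ m`). -/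
structure EllSeq (D : LatticeData V) (ZK : V → ℚ) where
  s : V → ℚ
  m : ℕ
  Bset : ℕ → Set V
  Z : ℕ → (V → ℚ)
  hs_S' : inS' D s
  hs_int : inL (ZK - s)
  hs_min : ∀ t : V → ℚ, inS' D t → inL (ZK - t) → s ≤ t
  hB0_not : ¬ inL ZK → Bset 0 = supp (ZK - s)
  hB0_in : inL ZK → Bset 0 = Set.univ
  hmono : ∀ j, j < m → Bset (j + 1) ⊆ Bset j
  hZ_int : ∀ j, j ≤ m → inL (Z j)
  hZ_pos : ∀ j, j ≤ m → 0 ≤ Z j ∧ Z j ≠ 0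
  hZ_supp : ∀ j, j ≤ m → supp (Z j) ⊆ Bset j
  hZ_anti : ∀ j, j ≤ m → ∀ u ∈ Bset j, D.B (Z j) (Ev u) ≤ 0
  hZ_min : ∀ j, j ≤ m → ∀ x : V → ℚ, inL x → 0 ≤ x → x ≠ 0 → supp x ⊆ Bset j →
      (∀ u ∈ Bset j, D.B x (Ev u) ≤ 0) → Z j ≤ x
  hBnext : ∀ j, j < m → Bset (j + 1) = supp (ZK - s - ∑ i ∈ Finset.range (j + 1), Z i)
  hsum : ZK = s + ∑ i ∈ Finset.range (m + 1), Z i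


/-!
With `s = 0`, write `D_j = Z_K - ∑_{k<j} Z_{B_k}`. By induction on `j`, `D_j` is canonical on
`B_j`: `χ(D_j) = 0`, and splitting `D_j = Z_{B_j} + D_{j+1}` ellipticity forces
`(Z_{B_j}, D_{j+1}) ≥ 0`, while `Z_{B_j}` is antinef on `B_j ⊇ |D_{j+1}|`, so `Z_{B_j}` is
orthogonal to `B_{j+1}`.

Take the largest `i` with `|Z| ⊆ B_i`. Then `W = D_i - Z` is orthogonal to `|Z|` and hence
effective by negative definiteness. If `W ≠ 0` it is antinef on `B_i` (using minimality off
`|Z|`), so `Z_{B_i} ≤ W`, i.e. `Z ≤ D_{i+1}`; this contradicts `D_{m+1} = 0` when `i = m`, and the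
maximality of `i` otherwise since `|D_{i+1}| = B_{i+1}`. Hence `Z = D_i`.
-/

lemma inL_sub {ι : Type*} {x y : ι → ℚ} (hx : inL x) (hy : inL y) : inL (x - y) := fun v => by
  obtain ⟨n, hn⟩ := hx v
  obtain ⟨k, hk⟩ := hy v
  exact ⟨n - k, by simp [hn, hk]⟩

lemma inL_sum {ι : Type*} {s : Finset ℕ} {f : ℕ → ι → ℚ} (h : ∀ i ∈ s, inL (f i)) :
    inL (∑ i ∈ s, f i) := by
  refine Finset.sum_induction f inL (fun a b ha hb v => ?_) (fun v => ⟨0, by simp⟩) h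
  obtain ⟨n, hn⟩ := ha v
  obtain ⟨k, hk⟩ := hb v
  exact ⟨n + k, by simp [hn, hk]⟩

lemma supp_subset_of_le {ι : Type*} {x y : ι → ℚ} (hx : 0 ≤ x) (hxy : x ≤ y) : supp x ⊆ supp y :=
  fun v hv => ((lt_of_le_of_ne (hx v) (Ne.symm hv)).trans_le (hxy v)).ne'

namespace LatticeData

variable (D : LatticeData V)

lemma B_eq_sum_right (x y : V → ℚ) : D.B x y = ∑ v, y v * D.B x (Ev v) := by
  conv_lhs => rw [← Finset.univ_sum_single y]
  rw [map_sum]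
  refine Finset.sum_congr rfl fun v _ => ?_
  rw [show Pi.single v (y v) = y v • Ev v by rw [Ev, ← Pi.single_smul', smul_eq_mul, mul_one],
    map_smul, smul_eq_mul]

lemma B_eq_sum_left (x y : V → ℚ) : D.B x y = ∑ v, x v * D.B (Ev v) y := by
  rw [D.symm, B_eq_sum_right]
  simp only [D.symm (Ev _)]

lemma chi_add (ZK x y : V → ℚ) : chi D ZK (x + y) = chi D ZK x + chi D ZK y - D.B x y := by
  have h := D.symm x y
  simp only [chi, map_add, map_sub, LinearMap.add_apply]
  linear_combination h / 2

variable {D}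

lemma mul_B_Ev_nonneg_of_apply_eq_zero {x : V → ℚ} (hx : 0 ≤ x) {v : V} (hv : x v = 0)
    (w : V) : 0 ≤ x w * D.B (Ev w) (Ev v) := by
  rcases eq_or_ne w v with rfl | hwv
  · simp [hv]
  · exact mul_nonneg (hx w) (D.offdiag w v hwv)

lemma B_Ev_nonneg_of_apply_eq_zero {x : V → ℚ} (hx : 0 ≤ x) {v : V} (hv : x v = 0) :
    0 ≤ D.B x (Ev v) := by
  rw [B_eq_sum_left]
  exact Finset.sum_nonneg fun w _ => mul_B_Ev_nonneg_of_apply_eq_zero hx hv w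

lemma B_nonneg_of_disjoint {x y : V → ℚ} (hx : 0 ≤ x) (hy : 0 ≤ y)
    (h : ∀ v, x v = 0 ∨ y v = 0) : 0 ≤ D.B x y := by
  rw [B_eq_sum_right]
  refine Finset.sum_nonneg fun v _ => ?_
  rcases h v with hxv | hyv
  · exact mul_nonneg (hy v) (B_Ev_nonneg_of_apply_eq_zero hx hxv)
  · simp [hyv]

lemma B_eq_zero_of_B_Ev_eq_zero_on_supp {x y : V → ℚ}
    (h : ∀ u ∈ supp x, D.B y (Ev u) = 0) : D.B y x = 0 := by
  rw [B_eq_sum_right]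
  refine Finset.sum_eq_zero fun u _ => ?_
  by_cases hu : x u = 0
  · simp [hu]
  · simp [h u hu]

lemma B_Ev_eq_zero_of_B_nonneg {x y : V → ℚ} (hx : 0 ≤ x)
    (hy : ∀ u ∈ supp x, D.B y (Ev u) ≤ 0) (hxy : 0 ≤ D.B y x) {v : V} (hv : v ∈ supp x) :
    D.B y (Ev v) = 0 := by
  have hterm : ∀ u ∈ Finset.univ, x u * D.B y (Ev u) ≤ 0 := fun u _ => by
    by_cases hu : x u = 0
    · simp [hu]
    · exact mul_nonpos_of_nonneg_of_nonpos (hx u) (hy u hu)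
  have hsum : ∑ u, x u * D.B y (Ev u) = 0 :=
    le_antisymm (Finset.sum_nonpos hterm) (D.B_eq_sum_right y x ▸ hxy)
  have hv0 := (Finset.sum_eq_zero_iff_of_nonpos hterm).mp hsum v (Finset.mem_univ v)
  exact (mul_eq_zero.mp hv0).resolve_left hv

lemma nonneg_of_B_Ev_eq_zero_of_neg {W : V → ℚ} (h : ∀ v, W v < 0 → D.B W (Ev v) = 0) :
    0 ≤ W := by
  have hW : D.B W W⁻ = 0 := B_eq_zero_of_B_Ev_eq_zero_on_supp fun v hv =>
    h v (not_le.mp fun hWv => hv (by rw [Pi.negPart_apply, negPart_eq_zero.mpr hWv]))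
  have hdisj : 0 ≤ D.B W⁺ W⁻ := B_nonneg_of_disjoint (posPart_nonneg W) (negPart_nonneg W)
    fun v => by
      simp only [Pi.posPart_apply, Pi.negPart_apply, posPart_eq_zero, negPart_eq_zero]
      exact le_total _ _
  have hneg : 0 ≤ D.B W⁻ W⁻ := by
    have hsplit : D.B W W⁻ = D.B W⁺ W⁻ - D.B W⁻ W⁻ := by
      rw [← LinearMap.sub_apply, ← map_sub, posPart_sub_negPart]
    linarith
  by_contra hW0
  exact hneg.not_gt (D.negdef _ fun h0 => hW0 (negPart_eq_zero.mp h0))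

lemma supp_eq_univ_of_antinef (hconn : (dualGraph D).Connected) {x : V → ℚ} (hx0 : 0 ≤ x)
    (hx : x ≠ 0) (hanti : ∀ v, D.B x (Ev v) ≤ 0) : supp x = Set.univ := by
  obtain ⟨u, hu⟩ := Function.ne_iff.mp hx
  refine Set.eq_univ_of_forall fun v => by_contra fun hv => ?_
  obtain ⟨d, -, hd₁, hd₂⟩ :=
    (hconn.preconnected u v).some.exists_boundary_dart (supp x) hu hv
  have hpos : 0 < D.B x (Ev d.snd) := by
    rw [B_eq_sum_left]
    refine Finset.sum_pos' (fun w _ => mul_B_Ev_nonneg_of_apply_eq_zero hx0 (not_not.mp hd₂) w)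
      ⟨d.fst, Finset.mem_univ _, mul_pos ((hx0 _).lt_of_ne' hd₁) d.adj.2⟩
  exact (hanti _).not_gt hpos

end LatticeData

namespace EllSeq

variable {D : LatticeData V} {ZK : V → ℚ} (seq : EllSeq D ZK)

/-- `seq.rest j` is the paper's `Z_K - C_{j-1}`. -/
def rest (j : ℕ) : V → ℚ := ZK - seq.s - ∑ k ∈ Finset.range j, seq.Z k

lemma rest_zero : seq.rest 0 = ZK - seq.s := by simp [rest]

lemma rest_succ (j : ℕ) : seq.rest (j + 1) = seq.rest j - seq.Z j := by
  simp only [rest, Finset.sum_range_succ]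
  abel

lemma rest_eq_sum_Ico {j : ℕ} (hj : j ≤ seq.m + 1) :
    seq.rest j = ∑ k ∈ Finset.Ico j (seq.m + 1), seq.Z k := by
  rw [rest, sub_sub, sub_eq_iff_eq_add', add_assoc, Finset.sum_range_add_sum_Ico _ hj]
  exact seq.hsum

lemma rest_m_succ : seq.rest (seq.m + 1) = 0 := by
  simp [seq.rest_eq_sum_Ico le_rfl]

lemma rest_nonneg {j : ℕ} (hj : j ≤ seq.m + 1) : 0 ≤ seq.rest j := by
  rw [seq.rest_eq_sum_Ico hj]
  exact Finset.sum_nonneg fun k hk =>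
    (seq.hZ_pos k (Nat.lt_succ_iff.mp (Finset.mem_Ico.mp hk).2)).1

lemma Z_le_rest {j : ℕ} (hj : j ≤ seq.m) : seq.Z j ≤ seq.rest j :=
  sub_nonneg.mp (seq.rest_succ j ▸ seq.rest_nonneg (Nat.succ_le_succ hj))

lemma rest_ne_zero {j : ℕ} (hj : j ≤ seq.m) : seq.rest j ≠ 0 := fun h0 =>
  (seq.hZ_pos j hj).2 (le_antisymm (h0 ▸ seq.Z_le_rest hj) (seq.hZ_pos j hj).1)

lemma inL_rest {j : ℕ} (hj : j ≤ seq.m + 1) : inL (seq.rest j) :=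
  inL_sub seq.hs_int (inL_sum fun k hk =>
    seq.hZ_int k (Nat.lt_succ_iff.mp ((Finset.mem_range.mp hk).trans_le hj)))

lemma supp_rest_subset_Bset {j : ℕ} (hj : j ≤ seq.m) : supp (seq.rest j) ⊆ seq.Bset j := by
  cases j with
  | zero =>
    by_cases hZKL : inL ZK
    · simp [seq.hB0_in hZKL]
    · rw [seq.hB0_not hZKL, rest_zero]
  | succ k => rw [seq.hBnext k hj, rest]

lemma supp_rest_eq_Bset (hZK : IsCanonical D ZK) (hmin : IsMinimal D)
    (hconn : (dualGraph D).Connected) (hZKL : inL ZK) (hs0 : seq.s = 0) {j : ℕ}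
    (hj : j ≤ seq.m) : supp (seq.rest j) = seq.Bset j := by
  cases j with
  | zero =>
    rw [seq.hB0_in hZKL]
    refine D.supp_eq_univ_of_antinef hconn (seq.rest_nonneg (Nat.zero_le _))
      (seq.rest_ne_zero hj) fun v => ?_
    rw [rest_zero, hs0, sub_zero, hZK v]
    linarith [hmin v]
  | succ k => rw [seq.hBnext k hj, rest]

lemma B_sum_Ev_eq_zero (hell : Elliptic D ZK) (hs0 : seq.s = 0) :
    ∀ j ≤ seq.m, ∀ v ∈ seq.Bset j, D.B (∑ k ∈ Finset.range j, seq.Z k) (Ev v) = 0 := by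
  intro j
  induction j with
  | zero => simp
  | succ k ih =>
    intro hk v hv
    have hkm : k ≤ seq.m := k.le_succ.trans hk
    have hrest : seq.rest k - ZK = -∑ i ∈ Finset.range k, seq.Z i := by
      rw [rest, hs0]
      abel
    have hχ : chi D ZK (seq.rest k) = 0 := by
      have horth := D.B_eq_zero_of_B_Ev_eq_zero_on_supp fun u hu =>
        ih hkm u (seq.supp_rest_subset_Bset hkm hu)
      rw [chi, hrest, map_neg, D.symm, horth, neg_zero, neg_zero, zero_div]
    have hpair : 0 ≤ D.B (seq.Z k) (seq.rest (k + 1)) := by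
      have hdec : seq.Z k + seq.rest (k + 1) = seq.rest k := by
        rw [seq.rest_succ, add_sub_cancel]
      have hsplit := D.chi_add ZK (seq.Z k) (seq.rest (k + 1))
      rw [hdec, hχ] at hsplit
      linarith [hell.1 _ (seq.hZ_int k hkm) (seq.hZ_pos k hkm).1 (seq.hZ_pos k hkm).2,
        hell.1 _ (seq.inL_rest (Nat.succ_le_succ hkm)) (seq.rest_nonneg (Nat.succ_le_succ hkm))
          (seq.rest_ne_zero hk)]
    have hZk : D.B (seq.Z k) (Ev v) = 0 :=
      D.B_Ev_eq_zero_of_B_nonneg (seq.rest_nonneg (Nat.succ_le_succ hkm))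
        (fun u hu => seq.hZ_anti k hkm u (seq.hmono k hk (seq.supp_rest_subset_Bset hk hu)))
        hpair (seq.hBnext k hk ▸ hv)
    rw [Finset.sum_range_succ, map_add, LinearMap.add_apply, ih hkm v (seq.hmono k hk hv), hZk,
      add_zero]

lemma B_rest_Ev (hZK : IsCanonical D ZK) (hell : Elliptic D ZK) (hs0 : seq.s = 0) {j : ℕ}
    (hj : j ≤ seq.m) {v : V} (hv : v ∈ seq.Bset j) :
    D.B (seq.rest j) (Ev v) = D.B (Ev v) (Ev v) + 2 := by
  rw [rest, hs0, sub_zero, map_sub, LinearMap.sub_apply, seq.B_sum_Ev_eq_zero hell hs0 j hj v hv,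
    sub_zero, hZK v]

lemma eq_rest_or_le_rest_succ (hZK : IsCanonical D ZK) (hmin : IsMinimal D)
    (hell : Elliptic D ZK) (hs0 : seq.s = 0) {Z : V → ℚ} (hZL : inL Z) (hZ0 : 0 ≤ Z)
    (hcan : ∀ v ∈ supp Z, D.B Z (Ev v) = D.B (Ev v) (Ev v) + 2) {i : ℕ} (hi : i ≤ seq.m)
    (hZi : supp Z ⊆ seq.Bset i) : Z = seq.rest i ∨ Z ≤ seq.rest (i + 1) := by
  set W := seq.rest i - Z with hW
  have hWZ : ∀ v ∈ supp Z, D.B W (Ev v) = 0 := fun v hv => by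
    rw [hW, map_sub, LinearMap.sub_apply, seq.B_rest_Ev hZK hell hs0 hi (hZi hv), hcan v hv,
      sub_self]
  have hW0 : 0 ≤ W := LatticeData.nonneg_of_B_Ev_eq_zero_of_neg fun v hv => hWZ v fun hZv => by
    have := seq.rest_nonneg (hi.trans (Nat.le_succ _)) v
    simp only [hW, Pi.sub_apply, hZv, sub_zero] at hv
    exact this.not_gt hv
  by_cases hWne : W = 0
  · exact Or.inl (sub_eq_zero.mp hWne).symm
  refine Or.inr ?_
  have hWsupp : supp W ⊆ seq.Bset i := fun v hv =>
    (Function.support_sub _ _ hv).elim (seq.supp_rest_subset_Bset hi ·) (hZi ·)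
  have hWanti : ∀ u ∈ seq.Bset i, D.B W (Ev u) ≤ 0 := fun u hu => by
    by_cases hZu : Z u = 0
    · rw [hW, map_sub, LinearMap.sub_apply, seq.B_rest_Ev hZK hell hs0 hi hu]
      linarith [hmin u, LatticeData.B_Ev_nonneg_of_apply_eq_zero (D := D) hZ0 hZu]
    · exact (hWZ u hZu).le
  have hZiW : seq.Z i ≤ W := seq.hZ_min i hi W
    (inL_sub (seq.inL_rest (hi.trans (Nat.le_succ _))) hZL) hW0 hWne hWsupp hWanti
  rw [seq.rest_succ]
  exact le_sub_comm.mp hZiW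

end EllSeq

theorem statement6_general {V : Type*} [Fintype V] [DecidableEq V]
    (D : LatticeData V) (ZK : V → ℚ) (hZK : IsCanonical D ZK)
    (hmin : IsMinimal D) (hell : Elliptic D ZK)
    (hconn : (dualGraph D).Connected)
    (hZKL : inL ZK)
    (seq : EllSeq D ZK) (hs0 : seq.s = 0)
    (Z : V → ℚ) (hZL : inL Z) (hZ0 : 0 ≤ Z) (hZne : Z ≠ 0)
    (hcan : ∀ v ∈ supp Z, D.B Z (Ev v) = D.B (Ev v) (Ev v) + 2) :
    ∃ i ≤ seq.m, supp Z = seq.Bset i ∧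
      Z = ZK - (seq.s + ∑ k ∈ Finset.range i, seq.Z k) := by
  classical
  set i := Nat.findGreatest (fun j => supp Z ⊆ seq.Bset j) seq.m
  have hi : i ≤ seq.m := Nat.findGreatest_le _
  have hZi : supp Z ⊆ seq.Bset i :=
    Nat.findGreatest_spec (P := fun j => supp Z ⊆ seq.Bset j) (Nat.zero_le _)
      (by simp [seq.hB0_in hZKL])
  rcases seq.eq_rest_or_le_rest_succ hZK hmin hell hs0 hZL hZ0 hcan hi hZi with hZ | hZ
  · refine ⟨i, hi, ?_, ?_⟩
    · rw [hZ, seq.supp_rest_eq_Bset hZK hmin hconn hZKL hs0 hi]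
    · rw [hZ, EllSeq.rest, sub_sub]
  · rcases hi.lt_or_eq with hlt | heq
    · refine absurd ?_ (Nat.findGreatest_is_greatest (Nat.lt_succ_self i) hlt)
      rw [← seq.supp_rest_eq_Bset hZK hmin hconn hZKL hs0 hlt]
      exact supp_subset_of_le hZ0 hZ
    · rw [heq, seq.rest_m_succ] at hZ
      exact absurd (le_antisymm hZ hZ0) hZne

/-- for a minimal elliptic numerically Gorenstein lattice with connected
dual graph, admitting an elliptic sequence with `s = 0` (so `B_0 = V`): if `Z ∈ L`,
`Z > 0` and `(Z, E_v) = (E_v,E_v) + 2` for all `v ∈ |Z|`, then `|Z| = B_i` for some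
`0 ≤ i ≤ m`, and `Z = Z_K - C_{i-1}` where `C_{i-1} = s + ∑_{k < i} Z_{B_k}`. -/
theorem statement6 {V : Type*} [Fintype V] [DecidableEq V] [Nonempty V]
    (D : LatticeData V) (ZK : V → ℚ) (hZK : IsCanonical D ZK)
    (hmin : IsMinimal D) (hell : Elliptic D ZK)
    (hconn : (dualGraph D).Connected)
    (hZKL : inL ZK)
    (seq : EllSeq D ZK) (hs0 : seq.s = 0)
    (Z : V → ℚ) (hZL : inL Z) (hZ0 : 0 ≤ Z) (hZne : Z ≠ 0)
    (hcan : ∀ v ∈ supp Z, D.B Z (Ev v) = D.B (Ev v) (Ev v) + 2) :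
    ∃ i ≤ seq.m, supp Z = seq.Bset i ∧
      Z = ZK - (seq.s + ∑ k ∈ Finset.range i, seq.Z k) :=
  statement6_general D ZK hZK hmin hell hconn hZKL seq hs0 Z hZL hZ0 hZne hcan
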